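/- arXiv:2602.08092 — 6 statements merged into one kernel-verified Lean document; each statement's English description precedes it below -/
import Mathlib

section
/- Suppose the observed regret satisfies R_T^obs ≤ C·√(T·log T) for some constant C ≥ 0 and T ≥ 1. Then the latent regret satisfies R_T^lat ≥ T·Δ − (C·Δ/δ_min)·√(T·log T). (Rate of Objective Decoupling: any algorithm achieving sublinear regret on the observed signal suffers linear regret on the latent signal.) -/
/-!
Each pull of an arm other than `a_soc` costs at least `δ_min` of observed regret, so at most
`C·√(T·log T)/δ_min` of the `T` pulls leave `a_soc`; every remaining pull of `a_soc` costs `Δ`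
of latent regret.
-/

open Finset

lemma mul_sum_sub_le_sum_mul {A : Type*} [Fintype A] {N g : A → ℝ} (hN : ∀ a, 0 ≤ N a)
    {b : A} {δ : ℝ} (hgb : 0 ≤ g b) (hg : ∀ a ≠ b, δ ≤ g a) :
    δ * (∑ a, N a - N b) ≤ ∑ a, N a * g a := by
  classical
  rw [← sum_erase_eq_sub (mem_univ b), mul_sum, ← add_sum_erase _ _ (mem_univ b)]
  have hrest : ∑ a ∈ univ.erase b, δ * N a ≤ ∑ a ∈ univ.erase b, N a * g a :=
    sum_le_sum fun a ha => by
      rw [mul_comm]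
      exact mul_le_mul_of_nonneg_left (hg a (ne_of_mem_erase ha)) (hN a)
  linarith [mul_nonneg (hN b) hgb]

theorem rate_of_objective_decoupling_general
    {A : Type*} [Fintype A]
    (T : ℕ)
    (N : A → ℕ) (hN : ∑ a, N a = T)
    (Rbar : A → ℝ) (a_soc : A)
    (δmin : ℝ) (hδdef : δmin = ⨅ a : {a : A // a ≠ a_soc}, (Rbar a_soc - Rbar a.1))
    (hδpos : 0 < δmin)
    (Rstar : A → ℝ) (a_star : A) (hstar : ∀ a, Rstar a ≤ Rstar a_star)
    (Δ : ℝ) (hΔdef : Δ = Rstar a_star - Rstar a_soc)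
    (C : ℝ)
    (Robs : ℝ) (hRobs : Robs = ∑ a, (N a : ℝ) * (Rbar a_soc - Rbar a))
    (Rlat : ℝ) (hRlat : Rlat = ∑ a, (N a : ℝ) * (Rstar a_star - Rstar a))
    (hObsBound : Robs ≤ C * Real.sqrt (T * Real.log T)) :
    Rlat ≥ T * Δ - (C * Δ / δmin) * Real.sqrt (T * Real.log T) := by
  set S := Real.sqrt (T * Real.log T)
  have hgap : ∀ a ≠ a_soc, δmin ≤ Rbar a_soc - Rbar a := fun a ha =>
    hδdef ▸ ciInf_le (Set.finite_range _).bddBelow (⟨a, ha⟩ : {a // a ≠ a_soc})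
  have hNT : ∑ a, (N a : ℝ) = T := by exact_mod_cast hN
  have hexplore : δmin * (T - N a_soc) ≤ Robs :=
    hNT ▸ hRobs ▸ mul_sum_sub_le_sum_mul (fun a => (N a).cast_nonneg) (by simp) hgap
  have hexplore' : T - N a_soc ≤ C * S / δmin := by
    rw [le_div_iff₀ hδpos]
    linarith
  have hexploit : N a_soc * Δ ≤ Rlat := hΔdef ▸ hRlat ▸
    single_le_sum (fun a _ => mul_nonneg (N a).cast_nonneg (sub_nonneg.2 (hstar a)))
      (mem_univ a_soc)
  have hΔ : 0 ≤ Δ := hΔdef ▸ sub_nonneg.2 (hstar a_soc)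
  calc T * Δ - (C * Δ / δmin) * S = T * Δ - C * S / δmin * Δ := by ring
    _ ≤ T * Δ - (T - N a_soc) * Δ := by gcongr
    _ = N a_soc * Δ := by ring
    _ ≤ Rlat := hexploit

/-- **Rate of Objective Decoupling.**
If the observed regret satisfies `R_T^obs ≤ C·√(T·log T)` (`C ≥ 0`, `T ≥ 1`), then the
latent regret satisfies `R_T^lat ≥ T·Δ − (C·Δ/δ_min)·√(T·log T)`. -/
theorem rate_of_objective_decoupling
    {A : Type*} [Fintype A] [DecidableEq A] [Nonempty A]
    (hcard : 1 < Fintype.card A)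
    (T : ℕ) (hT : 1 ≤ T)
    (N : A → ℕ) (hN : ∑ a, N a = T)
    (Rbar : A → ℝ) (a_soc : A) (hsoc : ∀ a, Rbar a ≤ Rbar a_soc)
    (δmin : ℝ) (hδdef : δmin = ⨅ a : {a : A // a ≠ a_soc}, (Rbar a_soc - Rbar a.1))
    (hδpos : 0 < δmin)
    (Rstar : A → ℝ) (a_star : A) (hstar : ∀ a, Rstar a ≤ Rstar a_star)
    (hne : a_star ≠ a_soc)
    (Δ : ℝ) (hΔdef : Δ = Rstar a_star - Rstar a_soc) (hΔpos : 0 < Δ)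
    (C : ℝ) (hC : 0 ≤ C)
    (Robs : ℝ) (hRobs : Robs = ∑ a, (N a : ℝ) * (Rbar a_soc - Rbar a))
    (Rlat : ℝ) (hRlat : Rlat = ∑ a, (N a : ℝ) * (Rstar a_star - Rstar a))
    (hObsBound : Robs ≤ C * Real.sqrt (T * Real.log T)) :
    Rlat ≥ T * Δ - (C * Δ / δmin) * Real.sqrt (T * Real.log T) :=
  rate_of_objective_decoupling_general T N hN Rbar a_soc δmin hδdef hδpos Rstar a_star hstar Δ hΔdef
    C Robs hRobs Rlat hRlat hObsBound
end

section
/- If the observed regret is sublinear in the horizon, i.e. R_T^obs / T → 0 as T → ∞, then liminf_{T→∞} R_T^lat / T ≥ Δ; in particular the latent regret is Ω(T), so Objective Decoupling occurs with a strictly positive asymptotic per-step cost. -/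
/-!
Under sublinear observed regret every action other than `a_soc` is pulled with vanishing
frequency, because each of them costs at least `δmin > 0` of observed reward per pull. The
empirical action distribution therefore converges to the point mass at `a_soc`, so the
per-step latent regret converges to the latent gap `Δ` of `a_soc`.
-/

open Filter Topology

theorem tendsto_of_tendsto_sum_of_nonneg {ι α : Type*} {s : Finset ι} {l : Filter α}
    {f : ι → α → ℝ} (hf : ∀ i ∈ s, ∀ x, 0 ≤ f i x)
    (hsum : Tendsto (fun x => ∑ i ∈ s, f i x) l (𝓝 0)) {i : ι} (hi : i ∈ s) :
    Tendsto (f i) l (𝓝 0) :=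
  tendsto_of_tendsto_of_tendsto_of_le_of_le tendsto_const_nhds hsum (hf i hi)
    fun x => Finset.single_le_sum (fun j hj => hf j hj x) hi

section EmpiricalFrequency

variable {A : Type*}

noncomputable def empiricalFreq (N : ℕ → A → ℕ) (T : ℕ) (a : A) : ℝ := N T a / T

theorem empiricalFreq_nonneg (N : ℕ → A → ℕ) (T : ℕ) (a : A) : 0 ≤ empiricalFreq N T a := by
  unfold empiricalFreq
  positivity

variable [Fintype A]

theorem sum_mul_div_eq_sum_empiricalFreq_mul (N : ℕ → A → ℕ) (c : A → ℝ) (T : ℕ) :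
    (∑ a, (N T a : ℝ) * c a) / T = ∑ a, empiricalFreq N T a * c a := by
  simp only [Finset.sum_div, empiricalFreq, mul_div_right_comm]

theorem sum_empiricalFreq {N : ℕ → A → ℕ} {T : ℕ} (hN : ∑ a, N T a = T) (hT : T ≠ 0) :
    ∑ a, empiricalFreq N T a = 1 := by
  have hT' : (T : ℝ) ≠ 0 := Nat.cast_ne_zero.mpr hT
  simp only [empiricalFreq]
  rw [← Finset.sum_div, ← Nat.cast_sum, hN, div_self hT']

variable [DecidableEq A] {N : ℕ → A → ℕ}

theorem tendsto_empiricalFreq_pi_single (hN : ∀ T, ∑ a, N T a = T) {a₀ : A}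
    (hrare : ∀ a ≠ a₀, Tendsto (fun T => empiricalFreq N T a) atTop (𝓝 0)) :
    Tendsto (empiricalFreq N) atTop (𝓝 (Pi.single a₀ 1)) := by
  have hfreq₀ : ∀ᶠ T in atTop,
      1 - ∑ a ∈ Finset.univ.erase a₀, empiricalFreq N T a = empiricalFreq N T a₀ := by
    filter_upwards [eventually_ne_atTop 0] with T hT
    rw [← sum_empiricalFreq (hN T) hT, ← Finset.add_sum_erase _ _ (Finset.mem_univ a₀),
      add_sub_cancel_right]
  have hrest : Tendsto (fun T => ∑ a ∈ Finset.univ.erase a₀, empiricalFreq N T a)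
      atTop (𝓝 0) := by
    simpa only [Finset.sum_const_zero] using
      tendsto_finsetSum (Finset.univ.erase a₀) fun a ha => hrare a (Finset.ne_of_mem_erase ha)
  rw [tendsto_pi_nhds]
  intro a
  by_cases ha : a = a₀
  · subst ha
    simpa using (tendsto_const_nhds.sub hrest).congr' hfreq₀
  · simpa [ha] using hrare a ha

theorem tendsto_empiricalFreq_of_regret_sublinear (hN : ∀ T, ∑ a, N T a = T)
    {gap : A → ℝ} {a₀ : A} (hgap : ∀ a ≠ a₀, 0 < gap a) (hgap₀ : 0 ≤ gap a₀)
    (hregret : Tendsto (fun T : ℕ => (∑ a, (N T a : ℝ) * gap a) / T) atTop (𝓝 0)) :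
    Tendsto (empiricalFreq N) atTop (𝓝 (Pi.single a₀ 1)) := by
  have hgap_nonneg : ∀ a, 0 ≤ gap a := by
    intro a
    rcases eq_or_ne a a₀ with rfl | ha
    exacts [hgap₀, (hgap a ha).le]
  have hcost : ∀ a, Tendsto (fun T => empiricalFreq N T a * gap a) atTop (𝓝 0) := by
    intro a
    refine tendsto_of_tendsto_sum_of_nonneg (f := fun a T => empiricalFreq N T a * gap a)
      (fun a _ T => mul_nonneg (empiricalFreq_nonneg N T a) (hgap_nonneg a)) ?_
      (Finset.mem_univ a)
    simpa only [sum_mul_div_eq_sum_empiricalFreq_mul] using hregret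
  refine tendsto_empiricalFreq_pi_single hN fun a ha => ?_
  simpa [(hgap a ha).ne'] using (hcost a).div_const (gap a)

theorem Filter.Tendsto.sum_empiricalFreq_mul {a₀ : A}
    (h : Tendsto (empiricalFreq N) atTop (𝓝 (Pi.single a₀ 1))) (c : A → ℝ) :
    Tendsto (fun T => ∑ a, empiricalFreq N T a * c a) atTop (𝓝 (c a₀)) := by
  have := tendsto_finsetSum Finset.univ fun a _ => (tendsto_pi_nhds.mp h a).mul_const (c a)
  simpa [Pi.single_apply] using this

end EmpiricalFrequency

theorem objective_decoupling_asymptotic_general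
    {A : Type*} [Fintype A] [DecidableEq A]
    (N : ℕ → A → ℕ) (hN : ∀ T, ∑ a, N T a = T)
    (Rbar : A → ℝ) (a_soc : A)
    (δmin : ℝ) (hδdef : δmin = ⨅ a : {a : A // a ≠ a_soc}, (Rbar a_soc - Rbar a.1))
    (hδpos : 0 < δmin)
    (Rstar : A → ℝ) (a_star : A)
    (Δ : ℝ) (hΔdef : Δ = Rstar a_star - Rstar a_soc)
    (hSublinear :
      Tendsto (fun T : ℕ => (∑ a, (N T a : ℝ) * (Rbar a_soc - Rbar a)) / T) atTop (nhds 0)) :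
    Δ ≤ atTop.liminf (fun T : ℕ => (∑ a, (N T a : ℝ) * (Rstar a_star - Rstar a)) / T) := by
  have hgap : ∀ a ≠ a_soc, 0 < Rbar a_soc - Rbar a := by
    intro a ha
    refine hδpos.trans_le ?_
    rw [hδdef]
    exact ciInf_le (Set.finite_range _).bddBelow (⟨a, ha⟩ : {a : A // a ≠ a_soc})
  have hfreq := tendsto_empiricalFreq_of_regret_sublinear hN hgap (sub_self _).ge hSublinear
  have hlatent := hfreq.sum_empiricalFreq_mul fun a => Rstar a_star - Rstar a
  simp only [← sum_mul_div_eq_sum_empiricalFreq_mul] at hlatent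
  rw [hlatent.liminf_eq, hΔdef]

/-- If the observed regret is sublinear in the horizon (`R_T^obs / T → 0`), then
`liminf_{T→∞} R_T^lat / T ≥ Δ`: the latent regret is `Ω(T)`, i.e. Objective Decoupling
occurs with a strictly positive asymptotic per-step cost. -/
theorem objective_decoupling_asymptotic
    {A : Type*} [Fintype A] [DecidableEq A] [Nonempty A]
    (hcard : 1 < Fintype.card A)
    (N : ℕ → A → ℕ) (hN : ∀ T, ∑ a, N T a = T)
    (Rbar : A → ℝ) (a_soc : A) (hsoc : ∀ a, Rbar a ≤ Rbar a_soc)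
    (δmin : ℝ) (hδdef : δmin = ⨅ a : {a : A // a ≠ a_soc}, (Rbar a_soc - Rbar a.1))
    (hδpos : 0 < δmin)
    (Rstar : A → ℝ) (a_star : A) (hstar : ∀ a, Rstar a ≤ Rstar a_star)
    (hne : a_star ≠ a_soc)
    (Δ : ℝ) (hΔdef : Δ = Rstar a_star - Rstar a_soc) (hΔpos : 0 < Δ)
    (hSublinear :
      Tendsto (fun T : ℕ => (∑ a, (N T a : ℝ) * (Rbar a_soc - Rbar a)) / T) atTop (nhds 0)) :
    Δ ≤ atTop.liminf (fun T : ℕ => (∑ a, (N T a : ℝ) * (Rstar a_star - Rstar a)) / T) :=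
  objective_decoupling_asymptotic_general N hN Rbar a_soc δmin hδdef hδpos Rstar a_star Δ hΔdef
    hSublinear
end

section
/- One-step trust-ratio contraction: fix a time t and γ > 0, and suppose that at step t every biased evaluator's loss exceeds every truthful evaluator's loss by at least γ, i.e. l(t, m) ≥ l(t, m') + γ for all m ∈ B and m' ∈ G. Then the ratio of biased to truthful aggregate weight contracts by a factor e^{−ηγ}: (∑_{m∈B} w(t+1, m)) / (∑_{m'∈G} w(t+1, m')) ≤ e^{−ηγ} · (∑_{m∈B} w(t, m)) / (∑_{m'∈G} w(t, m')). -/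
/-!
One step multiplies each weight by `exp (-η l t m)`, and the loss gap gives
`exp (-η l t m) ≤ e^{-ηγ} exp (-η l t m')` for every biased `m` and truthful `m'`.
After cross-multiplying, both sides of the ratio inequality are double sums over `B × G`,
compared term by term.
-/

open Finset Real

/-- Multiplicative-weights trust weights: `w 0 m = 1/|M|` and
`w (t+1) m = w t m · exp(−η · l t m)`. -/
noncomputable def mwuWeight {M : Type*} [Fintype M] (η : ℝ) (l : ℕ → M → ℝ) :
    ℕ → M → ℝ
  | 0 => fun _ => 1 / (Fintype.card M : ℝ)
  | t + 1 => fun m => mwuWeight η l t m * Real.exp (-η * l t m)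

theorem sum_mul_div_sum_mul_le_mul_sum_div_sum {ι : Type*} {s t : Finset ι} {w f g : ι → ℝ}
    {c : ℝ} (hws : ∀ i ∈ s, 0 ≤ w i) (hwt : ∀ j ∈ t, 0 < w j) (hg : ∀ j ∈ t, 0 < g j)
    (hfg : ∀ i ∈ s, ∀ j ∈ t, f i ≤ c * g j) :
    (∑ i ∈ s, w i * f i) / (∑ j ∈ t, w j * g j) ≤
      c * ((∑ i ∈ s, w i) / (∑ j ∈ t, w j)) := by
  rcases t.eq_empty_or_nonempty with rfl | ht
  · simp
  have hwgt : 0 < ∑ j ∈ t, w j * g j :=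
    sum_pos (fun j hj => mul_pos (hwt j hj) (hg j hj)) ht
  rw [mul_div_assoc', div_le_div_iff₀ hwgt (sum_pos hwt ht)]
  calc (∑ i ∈ s, w i * f i) * ∑ j ∈ t, w j
      = ∑ i ∈ s, ∑ j ∈ t, w i * w j * f i := by
        rw [sum_mul_sum]; exact sum_congr rfl fun _ _ => sum_congr rfl fun _ _ => by ring
    _ ≤ ∑ i ∈ s, ∑ j ∈ t, w i * w j * (c * g j) := by
        gcongr with i hi j hj
        · exact mul_nonneg (hws i hi) (hwt j hj).le
        · exact hfg i hi j hj
    _ = c * (∑ i ∈ s, w i) * ∑ j ∈ t, w j * g j := by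
        rw [mul_assoc, sum_mul_sum, mul_sum]
        refine sum_congr rfl fun _ _ => ?_
        rw [mul_sum]
        exact sum_congr rfl fun _ _ => by ring

namespace mwuWeight

variable {M : Type*} [Fintype M] (η : ℝ) (l : ℕ → M → ℝ)

theorem succ_apply (t : ℕ) (m : M) :
    mwuWeight η l (t + 1) m = mwuWeight η l t m * exp (-η * l t m) :=
  rfl

theorem pos (t : ℕ) (m : M) : 0 < mwuWeight η l t m := by
  induction t with
  | zero =>
    have : 0 < Fintype.card M := Fintype.card_pos_iff.2 ⟨m⟩
    simp only [mwuWeight]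
    positivity
  | succ t ih => exact mul_pos ih (exp_pos _)

end mwuWeight

theorem mwu_one_step_contraction_general
    {M : Type*} [Fintype M]
    (B G : Finset M)
    (η : ℝ) (hη : 0 < η) (l : ℕ → M → ℝ)
    (t : ℕ) (γ : ℝ)
    (hdom : ∀ m ∈ B, ∀ m' ∈ G, l t m' + γ ≤ l t m) :
    (∑ m ∈ B, mwuWeight η l (t + 1) m) / (∑ m' ∈ G, mwuWeight η l (t + 1) m') ≤
      Real.exp (-(η * γ)) *
        ((∑ m ∈ B, mwuWeight η l t m) / (∑ m' ∈ G, mwuWeight η l t m')) := by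
  simp only [mwuWeight.succ_apply]
  refine sum_mul_div_sum_mul_le_mul_sum_div_sum (fun m _ => (mwuWeight.pos η l t m).le)
    (fun m _ => mwuWeight.pos η l t m) (fun _ _ => exp_pos _) fun m hm m' hm' => ?_
  rw [← exp_add, exp_le_exp]
  nlinarith [hdom m hm m' hm']

/-- **One-step trust-ratio contraction.** If at step `t` every biased evaluator's loss
exceeds every truthful evaluator's loss by at least `γ`, then the ratio of biased to
truthful aggregate weight contracts by a factor `e^{−ηγ}`. -/
theorem mwu_one_step_contraction
    {M : Type*} [Fintype M] [DecidableEq M] [Nonempty M]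
    (B G : Finset M) (hB : B.Nonempty) (hG : G.Nonempty)
    (hdisj : Disjoint B G) (hunion : B ∪ G = Finset.univ)
    (η : ℝ) (hη : 0 < η) (l : ℕ → M → ℝ)
    (t : ℕ) (γ : ℝ) (hγ : 0 < γ)
    (hdom : ∀ m ∈ B, ∀ m' ∈ G, l t m' + γ ≤ l t m) :
    (∑ m ∈ B, mwuWeight η l (t + 1) m) / (∑ m' ∈ G, mwuWeight η l (t + 1) m') ≤
      Real.exp (-(η * γ)) *
        ((∑ m ∈ B, mwuWeight η l t m) / (∑ m' ∈ G, mwuWeight η l t m')) :=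
  mwu_one_step_contraction_general B G η hη l t γ hdom
end

section
/- Suppression time bound: fix γ > 0 and ε > 0, and suppose that at every step s every biased evaluator's loss exceeds every truthful evaluator's loss by at least γ, i.e. l(s, m) ≥ l(s, m') + γ for all m ∈ B, m' ∈ G, and all s ∈ ℕ. Then for every t ∈ ℕ with t ≥ (1/(η γ)) · log(|B| / (|G| · ε)), the normalized aggregate biased weight satisfies (∑_{m∈B} w(t, m)) / (∑_{m∈M} w(t, m)) ≤ ε. -/
open Finset Real

theorem Finset.card_mul_sum_le_card_mul_sum_of_le_mul {ι R : Type*} [CommSemiring R]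
    [PartialOrder R] [IsOrderedAddMonoid R] {s t : Finset ι} {f : ι → R} {c : R}
    (h : ∀ i ∈ s, ∀ j ∈ t, f i ≤ c * f j) :
    (#t : R) * ∑ i ∈ s, f i ≤ #s * (c * ∑ j ∈ t, f j) :=
  calc (#t : R) * ∑ i ∈ s, f i = ∑ i ∈ s, ∑ _j ∈ t, f i := by
        simp only [sum_const, nsmul_eq_mul, mul_sum]
    _ ≤ ∑ _i ∈ s, ∑ j ∈ t, c * f j :=
      sum_le_sum fun i hi => sum_le_sum fun j hj => h i hi j hj
    _ = #s * (c * ∑ j ∈ t, f j) := by simp only [sum_const, nsmul_eq_mul, mul_sum]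

theorem Real.mul_exp_neg_le_of_inv_mul_log_div_le {a b κ t : ℝ} (ha : 0 < a) (hκ : 0 < κ)
    (ht : 1 / κ * log (b / a) ≤ t) : b * exp (-(κ * t)) ≤ a := by
  have hlog : log (b / a) ≤ κ * t := by rwa [one_div, inv_mul_le_iff₀ hκ] at ht
  have hb : b ≤ exp (κ * t) * a :=
    (div_le_iff₀ ha).1 ((le_exp_log _).trans (exp_le_exp.2 hlog))
  rw [exp_neg, ← div_eq_mul_inv, div_le_iff₀ (exp_pos _), mul_comm a]
  exact hb

section mwuWeight

variable {M : Type*} [Fintype M] (η : ℝ) (l : ℕ → M → ℝ)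

theorem mwuWeight_nonneg (t : ℕ) (m : M) : 0 ≤ mwuWeight η l t m := by
  induction t with
  | zero => exact div_nonneg zero_le_one (Nat.cast_nonneg _)
  | succ t ih => exact mul_nonneg ih (exp_pos _).le

theorem mwuWeight_le_exp_mul_of_loss_gap (hη : 0 ≤ η) {γ : ℝ} {m m' : M}
    (hgap : ∀ s, l s m' + γ ≤ l s m) (t : ℕ) :
    mwuWeight η l t m ≤ exp (-(η * γ * t)) * mwuWeight η l t m' := by
  induction t with
  | zero => simp [mwuWeight]
  | succ t ih =>
    have hstep : exp (-η * l t m) ≤ exp (-η * (l t m' + γ)) :=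
      exp_le_exp.2 (by nlinarith [hgap t])
    calc mwuWeight η l (t + 1) m = mwuWeight η l t m * exp (-η * l t m) := rfl
      _ ≤ exp (-(η * γ * t)) * mwuWeight η l t m' * exp (-η * (l t m' + γ)) :=
        mul_le_mul ih hstep (exp_pos _).le (mul_nonneg (exp_pos _).le (mwuWeight_nonneg η l t m'))
      _ = exp (-(η * γ * ↑(t + 1))) * mwuWeight η l (t + 1) m' := by
        simp only [mwuWeight, Nat.cast_succ]
        rw [mul_assoc, mul_left_comm, ← exp_add, mul_left_comm, ← exp_add]
        ring_nf

end mwuWeight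

theorem mwu_suppression_time_bound_general
    {M : Type*} [Fintype M] [DecidableEq M]
    (B G : Finset M) (hG : G.Nonempty)
    (hdisj : Disjoint B G) (hunion : B ∪ G = Finset.univ)
    (η : ℝ) (hη : 0 < η) (l : ℕ → M → ℝ)
    (γ : ℝ) (hγ : 0 < γ) (ε : ℝ) (hε : 0 < ε)
    (hdom : ∀ s : ℕ, ∀ m ∈ B, ∀ m' ∈ G, l s m' + γ ≤ l s m)
    (t : ℕ)
    (ht : (1 / (η * γ)) * Real.log ((B.card : ℝ) / ((G.card : ℝ) * ε)) ≤ (t : ℝ)) :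
    (∑ m ∈ B, mwuWeight η l t m) / (∑ m, mwuWeight η l t m) ≤ ε := by
  set SB := ∑ m ∈ B, mwuWeight η l t m
  set SG := ∑ m ∈ G, mwuWeight η l t m
  have hGpos : (0 : ℝ) < #G := Nat.cast_pos.2 hG.card_pos
  have hSB : 0 ≤ SB := sum_nonneg fun m _ => mwuWeight_nonneg η l t m
  have hSG : 0 ≤ SG := sum_nonneg fun m _ => mwuWeight_nonneg η l t m
  have hagg : (#G : ℝ) * SB ≤ #B * (exp (-(η * γ * t)) * SG) :=
    card_mul_sum_le_card_mul_sum_of_le_mul fun m hm m' hm' =>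
      mwuWeight_le_exp_mul_of_loss_gap η l hη.le (fun s => hdom s m hm m' hm') t
  have hfactor : (#B : ℝ) * exp (-(η * γ * t)) ≤ #G * ε :=
    mul_exp_neg_le_of_inv_mul_log_div_le (by positivity) (mul_pos hη hγ) ht
  have hbiased : SB ≤ ε * SG := by
    refine le_of_mul_le_mul_left ?_ hGpos
    calc (#G : ℝ) * SB ≤ (#B * exp (-(η * γ * t))) * SG := by rw [mul_assoc]; exact hagg
      _ ≤ (#G * ε) * SG := mul_le_mul_of_nonneg_right hfactor hSG
      _ = #G * (ε * SG) := mul_assoc _ _ _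
  rw [← hunion, sum_union hdisj]
  exact div_le_of_le_mul₀ (add_nonneg hSB hSG) hε.le
    (by rw [mul_add]; linarith [mul_nonneg hε.le hSB])

/-- **Suppression time bound.** Under a persistent per-step loss gap `γ`, for every
`t ≥ (1/(ηγ)) · log(|B|/(|G|·ε))` the normalized aggregate biased weight is at most `ε`. -/
theorem mwu_suppression_time_bound
    {M : Type*} [Fintype M] [DecidableEq M] [Nonempty M]
    (B G : Finset M) (hB : B.Nonempty) (hG : G.Nonempty)
    (hdisj : Disjoint B G) (hunion : B ∪ G = Finset.univ)
    (η : ℝ) (hη : 0 < η) (l : ℕ → M → ℝ)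
    (γ : ℝ) (hγ : 0 < γ) (ε : ℝ) (hε : 0 < ε)
    (hdom : ∀ s : ℕ, ∀ m ∈ B, ∀ m' ∈ G, l s m' + γ ≤ l s m)
    (t : ℕ)
    (ht : (1 / (η * γ)) * Real.log ((B.card : ℝ) / ((G.card : ℝ) * ε)) ≤ (t : ℝ)) :
    (∑ m ∈ B, mwuWeight η l t m) / (∑ m, mwuWeight η l t m) ≤ ε :=
  mwu_suppression_time_bound_general B G hG hdisj hunion η hη l γ hγ ε hε hdom t ht
end

section
/- Asymptotic suppression of biased evaluators: fix γ > 0 and suppose that at every step s every biased evaluator's loss exceeds every truthful evaluator's loss by at least γ, i.e. l(s, m) ≥ l(s, m') + γ for all m ∈ B, m' ∈ G, and all s ∈ ℕ. Then the normalized aggregate biased weight tends to zero: (∑_{m∈B} w(t, m)) / (∑_{m∈M} w(t, m)) → 0 as t → ∞. -/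
open Filter

open Finset in
theorem Finset.sum_div_sum_le_card_mul {ι : Type*} {f : ι → ℝ} {s u : Finset ι} {i : ι}
    (hi : i ∈ u) (hf : ∀ j ∈ u, 0 ≤ f j) (hfi : 0 < f i) {c : ℝ} (hc : 0 ≤ c)
    (h : ∀ j ∈ s, f j ≤ c * f i) :
    (∑ j ∈ s, f j) / ∑ j ∈ u, f j ≤ #s * c := by
  have hsum : 0 < ∑ j ∈ u, f j := hfi.trans_le (single_le_sum hf hi)
  rw [div_le_iff₀ hsum]
  calc ∑ j ∈ s, f j
      ≤ ∑ _j ∈ s, c * f i := sum_le_sum h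
    _ = #s * c * f i := by rw [sum_const, nsmul_eq_mul, mul_assoc]
    _ ≤ #s * c * ∑ j ∈ u, f j := by gcongr; exact single_le_sum hf hi

section

variable {M : Type*} [Fintype M] {η : ℝ} {l : ℕ → M → ℝ}

theorem mwuWeight_pos (t : ℕ) (m : M) : 0 < mwuWeight η l t m := by
  induction t with
  | zero =>
    have : 0 < Fintype.card M := Fintype.card_pos_iff.mpr ⟨m⟩
    simp only [mwuWeight]
    positivity
  | succ t ih => exact mul_pos ih (Real.exp_pos _)

theorem mwuWeight_le_pow_mul_of_loss_gap (hη : 0 ≤ η) {γ : ℝ} {m m' : M}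
    (hgap : ∀ s, l s m' + γ ≤ l s m) (t : ℕ) :
    mwuWeight η l t m ≤ Real.exp (-(η * γ)) ^ t * mwuWeight η l t m' := by
  induction t with
  | zero => simp [mwuWeight]
  | succ t ih =>
    have hstep : Real.exp (-η * l t m) ≤ Real.exp (-(η * γ)) * Real.exp (-η * l t m') := by
      rw [← Real.exp_add, Real.exp_le_exp]
      nlinarith [hgap t]
    calc mwuWeight η l t m * Real.exp (-η * l t m)
        ≤ (Real.exp (-(η * γ)) ^ t * mwuWeight η l t m') *
            (Real.exp (-(η * γ)) * Real.exp (-η * l t m')) := by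
          have := mwuWeight_pos (η := η) (l := l) t m'
          gcongr
      _ = Real.exp (-(η * γ)) ^ (t + 1) * (mwuWeight η l t m' * Real.exp (-η * l t m')) := by
          ring

end

theorem mwu_asymptotic_suppression_general
    {M : Type*} [Fintype M]
    (B G : Finset M) (hG : G.Nonempty)
    (η : ℝ) (hη : 0 < η) (l : ℕ → M → ℝ)
    (γ : ℝ) (hγ : 0 < γ)
    (hdom : ∀ s : ℕ, ∀ m ∈ B, ∀ m' ∈ G, l s m' + γ ≤ l s m) :
    Tendsto (fun t : ℕ => (∑ m ∈ B, mwuWeight η l t m) / (∑ m, mwuWeight η l t m))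
      atTop (nhds 0) := by
  obtain ⟨g, hg⟩ := hG
  have hbound (t : ℕ) : (∑ m ∈ B, mwuWeight η l t m) / (∑ m, mwuWeight η l t m) ≤
      B.card * Real.exp (-(η * γ)) ^ t :=
    Finset.sum_div_sum_le_card_mul (Finset.mem_univ g) (fun m _ => (mwuWeight_pos t m).le)
      (mwuWeight_pos t g) (by positivity)
      fun m hm => mwuWeight_le_pow_mul_of_loss_gap hη.le (fun s => hdom s m hm g hg) t
  have hdecay : Tendsto (fun t : ℕ => B.card * Real.exp (-(η * γ)) ^ t) atTop (nhds 0) := by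
    have hlt : Real.exp (-(η * γ)) < 1 := Real.exp_lt_one_iff.mpr (by nlinarith)
    simpa using (tendsto_pow_atTop_nhds_zero_of_lt_one (Real.exp_pos _).le hlt).const_mul
      (B.card : ℝ)
  refine squeeze_zero (fun t => ?_) hbound hdecay
  exact div_nonneg (Finset.sum_nonneg fun m _ => (mwuWeight_pos t m).le)
    (Finset.sum_nonneg fun m _ => (mwuWeight_pos t m).le)

/-- **Asymptotic suppression of biased evaluators.** Under a persistent per-step loss
gap `γ > 0`, the normalized aggregate biased weight tends to zero as `t → ∞`. -/
theorem mwu_asymptotic_suppression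
    {M : Type*} [Fintype M] [DecidableEq M] [Nonempty M]
    (B G : Finset M) (hB : B.Nonempty) (hG : G.Nonempty)
    (hdisj : Disjoint B G) (hunion : B ∪ G = Finset.univ)
    (η : ℝ) (hη : 0 < η) (l : ℕ → M → ℝ)
    (γ : ℝ) (hγ : 0 < γ)
    (hdom : ∀ s : ℕ, ∀ m ∈ B, ∀ m' ∈ G, l s m' + γ ≤ l s m) :
    Tendsto (fun t : ℕ => (∑ m ∈ B, mwuWeight η l t m) / (∑ m, mwuWeight η l t m))
      atTop (nhds 0) :=
  mwu_asymptotic_suppression_general B G hG η hη l γ hγ hdom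
end

section
/- Combined decoupling bound with explicit constants: suppose the observed regret satisfies R_T^obs ≤ C·√(T·log T) with C ≥ 0 and T ≥ 1. Then the number of pulls of the sycophantic action satisfies (N(a_soc) : ℝ) ≥ T − (C/δ_min)·√(T·log T), and consequently the latent regret satisfies R_T^lat ≥ (T − (C/δ_min)·√(T·log T))·Δ. -/
/-!
Every pull of an action other than `a_soc` costs at least `δ_min` of observed regret, so at most
`R_T^obs / δ_min ≤ (C/δ_min)·√(T·log T)` of the `T` pulls avoid `a_soc`. Each pull of `a_soc`
contributes exactly `Δ` to the latent regret, and every other term of the latent regret is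
nonnegative because `a*` maximizes `R*`.
-/

open Finset

section Regret

variable {A : Type*} [Fintype A]

def regret (N : A → ℕ) (r : A → ℝ) (a₀ : A) : ℝ :=
  ∑ a, (N a : ℝ) * (r a₀ - r a)

theorem mul_sub_le_regret [DecidableEq A] {N : A → ℕ} {T : ℕ} (hN : ∑ a, N a = T)
    {r : A → ℝ} {a₀ : A} {δ : ℝ} (hgap : ∀ a ≠ a₀, δ ≤ r a₀ - r a) :
    δ * (T - N a₀) ≤ regret N r a₀ := by
  have hrest : (T : ℝ) - N a₀ = ∑ a ∈ univ.erase a₀, (N a : ℝ) := by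
    rw [← hN, Nat.cast_sum, ← add_sum_erase _ _ (mem_univ a₀)]
    ring
  calc δ * (T - N a₀) = ∑ a ∈ univ.erase a₀, (N a : ℝ) * δ := by
        rw [hrest, mul_sum]
        simp only [mul_comm]
    _ ≤ ∑ a ∈ univ.erase a₀, (N a : ℝ) * (r a₀ - r a) :=
        sum_le_sum fun a ha =>
          mul_le_mul_of_nonneg_left (hgap a (ne_of_mem_erase ha)) (Nat.cast_nonneg _)
    _ = regret N r a₀ := by
        rw [regret, ← add_sum_erase _ _ (mem_univ a₀), sub_self, mul_zero, zero_add]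

theorem mul_le_regret_of_forall_le (N : A → ℕ) {r : A → ℝ} {a₁ : A}
    (hmax : ∀ a, r a ≤ r a₁) (a₀ : A) :
    (N a₀ : ℝ) * (r a₁ - r a₀) ≤ regret N r a₁ :=
  single_le_sum (fun a _ => mul_nonneg (Nat.cast_nonneg _) (sub_nonneg.2 (hmax a))) (mem_univ a₀)

end Regret

theorem combined_decoupling_bound_general
    {A : Type*} [Fintype A] [DecidableEq A]
    (T : ℕ)
    (N : A → ℕ) (hN : ∑ a, N a = T)
    (Rbar : A → ℝ) (a_soc : A)
    (δmin : ℝ) (hδdef : δmin = ⨅ a : {a : A // a ≠ a_soc}, (Rbar a_soc - Rbar a.1))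
    (hδpos : 0 < δmin)
    (Rstar : A → ℝ) (a_star : A) (hstar : ∀ a, Rstar a ≤ Rstar a_star)
    (Δ : ℝ) (hΔdef : Δ = Rstar a_star - Rstar a_soc)
    (C : ℝ)
    (Robs : ℝ) (hRobs : Robs = ∑ a, (N a : ℝ) * (Rbar a_soc - Rbar a))
    (Rlat : ℝ) (hRlat : Rlat = ∑ a, (N a : ℝ) * (Rstar a_star - Rstar a))
    (hObsBound : Robs ≤ C * Real.sqrt (T * Real.log T)) :
    (N a_soc : ℝ) ≥ T - (C / δmin) * Real.sqrt (T * Real.log T) ∧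
      Rlat ≥ (T - (C / δmin) * Real.sqrt (T * Real.log T)) * Δ := by
  have hgap : ∀ a ≠ a_soc, δmin ≤ Rbar a_soc - Rbar a := fun a ha =>
    hδdef ▸ ciInf_le (Finite.bddBelow_range _) (⟨a, ha⟩ : {a : A // a ≠ a_soc})
  have hobs : δmin * (T - N a_soc) ≤ Robs := hRobs ▸ mul_sub_le_regret hN hgap
  have hpulls : (N a_soc : ℝ) ≥ T - (C / δmin) * Real.sqrt (T * Real.log T) := by
    rw [ge_iff_le, sub_le_comm, div_mul_eq_mul_div, le_div_iff₀ hδpos]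
    linarith
  have hlat : (N a_soc : ℝ) * Δ ≤ Rlat :=
    hRlat ▸ hΔdef ▸ mul_le_regret_of_forall_le N hstar a_soc
  refine ⟨hpulls, ?_⟩
  calc Rlat ≥ (N a_soc : ℝ) * Δ := hlat
    _ ≥ (T - (C / δmin) * Real.sqrt (T * Real.log T)) * Δ :=
        mul_le_mul_of_nonneg_right hpulls (hΔdef ▸ sub_nonneg.2 (hstar a_soc))

/-- **Combined decoupling bound with explicit constants.**
If the observed regret satisfies `R_T^obs ≤ C·√(T·log T)` with `C ≥ 0` and `T ≥ 1`, then
`(N a_soc : ℝ) ≥ T − (C/δ_min)·√(T·log T)` and consequently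
`R_T^lat ≥ (T − (C/δ_min)·√(T·log T))·Δ`. -/
theorem combined_decoupling_bound
    {A : Type*} [Fintype A] [DecidableEq A] [Nonempty A]
    (hcard : 1 < Fintype.card A)
    (T : ℕ) (hT : 1 ≤ T)
    (N : A → ℕ) (hN : ∑ a, N a = T)
    (Rbar : A → ℝ) (a_soc : A) (hsoc : ∀ a, Rbar a ≤ Rbar a_soc)
    (δmin : ℝ) (hδdef : δmin = ⨅ a : {a : A // a ≠ a_soc}, (Rbar a_soc - Rbar a.1))
    (hδpos : 0 < δmin)
    (Rstar : A → ℝ) (a_star : A) (hstar : ∀ a, Rstar a ≤ Rstar a_star)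
    (hne : a_star ≠ a_soc)
    (Δ : ℝ) (hΔdef : Δ = Rstar a_star - Rstar a_soc) (hΔpos : 0 < Δ)
    (C : ℝ) (hC : 0 ≤ C)
    (Robs : ℝ) (hRobs : Robs = ∑ a, (N a : ℝ) * (Rbar a_soc - Rbar a))
    (Rlat : ℝ) (hRlat : Rlat = ∑ a, (N a : ℝ) * (Rstar a_star - Rstar a))
    (hObsBound : Robs ≤ C * Real.sqrt (T * Real.log T)) :
    (N a_soc : ℝ) ≥ T - (C / δmin) * Real.sqrt (T * Real.log T) ∧
      Rlat ≥ (T - (C / δmin) * Real.sqrt (T * Real.log T)) * Δ :=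
  combined_decoupling_bound_general T N hN Rbar a_soc δmin hδdef hδpos Rstar a_star hstar Δ hΔdef C
    Robs hRobs Rlat hRlat hObsBound
end
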